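/- arXiv:1108.5095 — 3 statements merged into one kernel-verified Lean document; each statement's English description precedes it below -/
import Mathlib

section
/- For every decreasing sequence α of levels with α ≠ (), step^k_α ≥ min X^k_α + 1. -/
/-- The `k`-bit reversal permutation of `{0,…,2^k−1}`. -/
def revBits (k x : ℕ) : ℕ := ∑ i ∈ Finset.range k, 2 ^ i * (x / 2 ^ (k - 1 - i) % 2)

/-- The sets of time slots `Y^k_α`.  A (decreasing) sequence `α = (l_0,…,l_r)` of the paper
is represented here as the list `[l_r, …, l_0]`, with the most recently appended level first:
`Y^k_{()} = {0,…,2^k−1}` and `Y^k_{α·(l)} = {y ∈ Y^k_α : ⌈log₂(y − min Y^k_α + 1)⌉ = l}`. -/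
noncomputable def Y (k : ℕ) : List ℕ → Finset ℕ
  | [] => Finset.range (2 ^ k)
  | l :: α => (Y k α).filter (fun y => Nat.clog 2 (y - sInf {z : ℕ | z ∈ Y k α} + 1) = l)

/-- Validity of the (reversed) sequence: the paper's `α` is strictly decreasing with
entries in `{0,…,k}`, i.e. the reversed list is strictly increasing with entries `≤ k`. -/
def ValidSeq (k : ℕ) (α : List ℕ) : Prop :=
  List.Pairwise (· < ·) α ∧ ∀ l ∈ α, l ≤ k

/-- The ranks `X^k_α = revBits_k(Y^k_α)`. -/
noncomputable def X (k : ℕ) (α : List ℕ) : Finset ℕ := (Y k α).image (revBits k)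

/-- `step^k_{()} = 1` and `step^k_{α·(l)} = 2^{k−l+1}`. -/
def stepA (k : ℕ) : List ℕ → ℕ
  | [] => 1
  | l :: _ => 2 ^ (k - l + 1)

/-!
Along a valid sequence every `Y^k_α` is an interval of naturals: refining by a level `l` keeps
the offsets `d` from the old minimum with `⌈log₂(d + 1)⌉ = l`, i.e. `2^(l-1) ≤ d < 2^l`, so the
minimum of `Y^k_α` is the sum of the `2^(l-1)` over the levels `l` of `α`. As the levels
decrease, this minimum is divisible by `2^(l-1)` for the last level `l`; bit reversal moves
its nonzero bits to the `k - l + 1` lowest positions, so its image, an element of `X^k_α`,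
is below `2^(k-l+1) = step^k_α`.
-/

open Finset

lemma Nat.clog_two_add_one_eq_iff (d l : ℕ) :
    Nat.clog 2 (d + 1) = l ↔ 2 ^ l / 2 ≤ d ∧ d < 2 ^ l := by
  have hle (y : ℕ) : Nat.clog 2 (d + 1) ≤ y ↔ d + 1 ≤ 2 ^ y :=
    Nat.clog_le_iff_le_pow one_lt_two
  have hlt (y : ℕ) : y < Nat.clog 2 (d + 1) ↔ 2 ^ y < d + 1 :=
    Nat.lt_clog_iff_pow_lt one_lt_two
  cases l with
  | zero => have := hle 0; simp only [pow_zero] at *; omega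
  | succ n =>
    have := hle (n + 1)
    have := hlt n
    rw [pow_succ, Nat.mul_div_cancel _ two_pos] at *
    omega

lemma sum_range_two_pow_mul_mod_two_lt (f : ℕ → ℕ) (n : ℕ) :
    ∑ i ∈ range n, 2 ^ i * (f i % 2) < 2 ^ n := by
  induction n with
  | zero => simp
  | succ n ih =>
    rw [sum_range_succ, pow_succ]
    have : 2 ^ n * (f n % 2) ≤ 2 ^ n :=
      mul_le_of_le_one_right' (Nat.le_of_lt_succ (Nat.mod_lt _ two_pos))
    omega

lemma revBits_lt_two_pow_of_dvd {k j m : ℕ} (hm : 2 ^ j ∣ m) : revBits k m < 2 ^ (k - j) := by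
  have hlow : ∑ i ∈ range (k - j), 2 ^ i * (m / 2 ^ (k - 1 - i) % 2) = revBits k m := by
    refine sum_subset (range_subset_range.mpr (Nat.sub_le k j)) fun i hik hij => ?_
    simp only [mem_range, not_lt] at hik hij
    have h2 : 2 ∣ m / 2 ^ (k - 1 - i) := Nat.dvd_div_of_mul_dvd <|
      (pow_succ 2 (k - 1 - i)).symm ▸ (pow_dvd_pow 2 (by omega)).trans hm
    simp [Nat.mod_eq_zero_of_dvd h2]
  exact hlow ▸ sum_range_two_pow_mul_mod_two_lt _ _

lemma ValidSeq.tail {k l : ℕ} {α : List ℕ} (h : ValidSeq k (l :: α)) : ValidSeq k α :=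
  ⟨h.1.of_cons, fun l' hl' => h.2 l' (List.mem_cons_of_mem l hl')⟩

/-- `min Y^k_α`: level `l` contributes `2^(l-1)`, but level `0` contributes `0`. -/
def minY (α : List ℕ) : ℕ := (α.map fun l => 2 ^ l / 2).sum

def lengthY (k : ℕ) : List ℕ → ℕ
  | [] => 2 ^ k
  | l :: _ => 2 ^ l - 2 ^ l / 2

lemma lengthY_pos (k : ℕ) (α : List ℕ) : 0 < lengthY k α := by
  cases α with
  | nil => exact Nat.two_pow_pos k
  | cons l _ => exact Nat.sub_pos_of_lt (Nat.div_lt_self (Nat.two_pow_pos l) one_lt_two)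

lemma two_pow_le_lengthY {k l : ℕ} {α : List ℕ} (h : ValidSeq k (l :: α)) :
    2 ^ l ≤ lengthY k α := by
  cases α with
  | nil => exact Nat.pow_le_pow_right two_pos (h.2 l List.mem_cons_self)
  | cons l' _ =>
    have hll' : l + 1 ≤ l' := (List.pairwise_cons.mp h.1).1 l' List.mem_cons_self
    have hpow : 2 ^ l * 2 ≤ 2 ^ l' := pow_succ 2 l ▸ Nat.pow_le_pow_right two_pos hll'
    have := Nat.div_mul_le_self (2 ^ l') 2
    simp only [lengthY]
    omega

lemma Y_cons_eq_Ico {k l a b : ℕ} {α : List ℕ} (hY : Y k α = Ico a b) (hb : a + 2 ^ l ≤ b) :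
    Y k (l :: α) = Ico (a + 2 ^ l / 2) (a + 2 ^ l) := by
  have hmin : sInf {z : ℕ | z ∈ Y k α} = a := by
    change sInf (↑(Y k α) : Set ℕ) = a
    rw [hY, coe_Ico, csInf_Ico (by have := Nat.two_pow_pos l; omega)]
  ext y
  rw [Y, hmin, hY]
  simp only [mem_filter, mem_Ico]
  constructor
  · rintro ⟨⟨hay, -⟩, hlog⟩
    have := (Nat.clog_two_add_one_eq_iff (y - a) l).mp hlog
    omega
  · rintro ⟨hay, hyb⟩
    refine ⟨⟨by omega, by omega⟩, (Nat.clog_two_add_one_eq_iff (y - a) l).mpr ?_⟩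
    omega

lemma Y_eq_Ico {k : ℕ} {α : List ℕ} (h : ValidSeq k α) :
    Y k α = Ico (minY α) (minY α + lengthY k α) := by
  induction α with
  | nil => simp only [Y, minY, lengthY, List.map_nil, List.sum_nil, zero_add, range_eq_Ico]
  | cons l α ih =>
    rw [Y_cons_eq_Ico (ih h.tail) (by have := two_pow_le_lengthY h; omega)]
    simp only [minY, lengthY, List.map_cons, List.sum_cons]
    congr 1 <;> have := Nat.div_le_self (2 ^ l) 2 <;> omega

lemma minY_mem_Y {k : ℕ} {α : List ℕ} (h : ValidSeq k α) : minY α ∈ Y k α := by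
  rw [Y_eq_Ico h, mem_Ico]
  exact ⟨le_rfl, Nat.lt_add_of_pos_right (lengthY_pos k α)⟩

lemma two_pow_pred_dvd_minY {l : ℕ} {α : List ℕ} (h : (l :: α).Pairwise (· < ·)) :
    2 ^ (l - 1) ∣ minY (l :: α) := by
  refine List.dvd_sum fun x hx => ?_
  obtain ⟨l', hl', rfl⟩ := List.mem_map.mp hx
  have hll' : l ≤ l' := by
    rcases List.mem_cons.mp hl' with rfl | hl'
    · exact le_rfl
    · exact ((List.pairwise_cons.mp h).1 l' hl').le
  rcases Nat.eq_zero_or_pos l' with rfl | hpos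
  · simp [Nat.le_zero.mp hll']
  · have : 2 ^ l' / 2 = 2 ^ (l' - 1) := by
      rw [← Nat.pow_div (n := 1) hpos two_pos, pow_one]
    exact this ▸ pow_dvd_pow 2 (by omega)

lemma revBits_minY_lt_stepA (k : ℕ) {α : List ℕ} (h : α.Pairwise (· < ·)) :
    revBits k (minY α) < stepA k α := by
  cases α with
  | nil => simp [revBits, minY, stepA]
  | cons l α =>
    calc revBits k (minY (l :: α)) < 2 ^ (k - (l - 1)) :=
          revBits_lt_two_pow_of_dvd (two_pow_pred_dvd_minY h)
      _ ≤ 2 ^ (k - l + 1) := Nat.pow_le_pow_right two_pos (by omega)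

theorem step_ge_min_add_one_general (k : ℕ) (α : List ℕ) (h : ValidSeq k α) :
    sInf {z : ℕ | z ∈ X k α} + 1 ≤ stepA k α :=
  calc sInf {z : ℕ | z ∈ X k α} + 1 ≤ revBits k (minY α) + 1 :=
        Nat.add_le_add_right (Nat.sInf_le (mem_image_of_mem _ (minY_mem_Y h))) 1
    _ ≤ stepA k α := revBits_minY_lt_stepA k h.1

/-- For nonempty `α`: `step^k_α ≥ min X^k_α + 1`. -/
theorem step_ge_min_add_one (k : ℕ) (α : List ℕ) (h : ValidSeq k α) (hne : α ≠ []) :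
    sInf {z : ℕ | z ∈ X k α} + 1 ≤ stepA k α :=
  step_ge_min_add_one_general k α h
end

section
/- For every decreasing sequence α of levels, max X^k_α + step^k_α ≥ 2^k. -/
/-!
For a valid `α` whose last appended level is `l`, the slots `Y^k_α` form the upper half of a
block of `2^l` consecutive slots starting at a multiple of `2^l` (by induction, `Y^k_α` is
an interval aligned to its own length). The last slot of that block ends in `l` one-bits, so
its bit reversal starts with `l` one-bits and is at least `2^k - 2^(k-l)`, while
`step^k_α ≥ 2^(k-l)`. For `α = ()` the block is all of `{0,…,2^k−1}` and `l = k`.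
-/

lemma Nat.clog_two_succ_eq_iff {t l : ℕ} :
    Nat.clog 2 (t + 1) = l ↔ 2 ^ l - 2 ^ (l - 1) ≤ t ∧ t < 2 ^ l := by
  have hle := Nat.clog_le_iff_le_pow one_lt_two (x := t + 1) (y := l)
  rcases l with _ | l
  · simp only [pow_zero, Nat.le_zero] at hle ⊢
    omega
  · have hlt := Nat.lt_clog_iff_pow_lt one_lt_two (x := t + 1) (y := l)
    rw [Nat.add_sub_cancel, pow_succ] at *
    omega

lemma Nat.sum_Ico_two_pow {a b : ℕ} (hab : a ≤ b) :
    ∑ i ∈ Finset.Ico a b, 2 ^ i = 2 ^ b - 2 ^ a := by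
  have hsplit := Finset.sum_range_add_sum_Ico (2 ^ ·) hab
  simp only [Nat.geomSum_eq le_rfl] at hsplit
  have : 1 ≤ 2 ^ a := Nat.one_le_two_pow
  omega

lemma Nat.div_two_pow_mod_two_eq_one {y l j : ℕ} (hy : y % 2 ^ l = 2 ^ l - 1) (hj : j < l) :
    y / 2 ^ j % 2 = 1 := by
  have hbit := Nat.testBit_mod_two_pow y l j
  rw [hy, Nat.testBit_two_pow_sub_one, Nat.testBit_eq_decide_div_mod_eq] at hbit
  simpa [hj] using hbit.symm

lemma sub_two_pow_le_revBits {k l y : ℕ} (hlk : l ≤ k) (hy : y % 2 ^ l = 2 ^ l - 1) :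
    2 ^ k - 2 ^ (k - l) ≤ revBits k y :=
  calc 2 ^ k - 2 ^ (k - l) = ∑ i ∈ Finset.Ico (k - l) k, 2 ^ i :=
        (Nat.sum_Ico_two_pow (Nat.sub_le k l)).symm
    _ = ∑ i ∈ Finset.Ico (k - l) k, 2 ^ i * (y / 2 ^ (k - 1 - i) % 2) := by
      refine Finset.sum_congr rfl fun i hi => ?_
      rw [Finset.mem_Ico] at hi
      rw [Nat.div_two_pow_mod_two_eq_one hy (by omega), mul_one]
    _ ≤ revBits k y := Finset.sum_le_sum_of_subset
        (by simp only [Finset.range_eq_Ico, Finset.Ico_subset_Ico_left, Nat.zero_le])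

lemma filter_clog_Ico_eq {m n l : ℕ} (hl : 2 ^ l ≤ n) :
    (Finset.Ico m (m + n)).filter (fun y => Nat.clog 2 (y - m + 1) = l) =
      Finset.Ico (m + (2 ^ l - 2 ^ (l - 1))) (m + 2 ^ l) := by
  ext y
  simp only [Finset.mem_filter, Finset.mem_Ico, Nat.clog_two_succ_eq_iff]
  omega

/-- `Y k α` has `2 ^ logCardY k α` elements; at level `0` the truncated `0 - 1 = 0` is right. -/
def logCardY (k : ℕ) : List ℕ → ℕ
  | [] => k
  | l :: _ => l - 1

namespace ValidSeq

variable {k l : ℕ} {α : List ℕ}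

lemma tail_s8 (h : ValidSeq k (l :: α)) : ValidSeq k α :=
  ⟨h.1.of_cons, fun j hj => h.2 j (List.mem_cons_of_mem l hj)⟩

lemma le_logCardY_tail (h : ValidSeq k (l :: α)) : l ≤ logCardY k α := by
  cases α with
  | nil => exact h.2 l List.mem_cons_self
  | cons j γ => exact Nat.le_sub_one_of_lt (List.rel_of_pairwise_cons h.1 List.mem_cons_self)

lemma headD_le (h : ValidSeq k α) : α.headD k ≤ k := by
  cases α with
  | nil => exact le_rfl
  | cons l β => exact h.2 l List.mem_cons_self

end ValidSeq

lemma Y_cons_eq_Ico_s8 {k l m n : ℕ} {α : List ℕ} (hY : Y k α = Finset.Ico m (m + n))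
    (hl : 2 ^ l ≤ n) : Y k (l :: α) = Finset.Ico (m + (2 ^ l - 2 ^ (l - 1))) (m + 2 ^ l) := by
  have hmin : sInf {z : ℕ | z ∈ Y k α} = m := by
    rw [Finset.setOfPred_mem, hY, Finset.coe_Ico, csInf_Ico]
    have : 0 < 2 ^ l := Nat.two_pow_pos l
    omega
  rw [Y, hmin, hY, filter_clog_Ico_eq hl]

lemma Y_eq_aligned_Ico {k : ℕ} {α : List ℕ} (h : ValidSeq k α) :
    ∃ m, 2 ^ logCardY k α ∣ m ∧ Y k α = Finset.Ico m (m + 2 ^ logCardY k α) := by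
  induction α with
  | nil => exact ⟨0, dvd_zero _, by rw [zero_add, Y, logCardY, Finset.range_eq_Ico]⟩
  | cons l β ih =>
    obtain ⟨m, hdvd, hY⟩ := ih h.tail_s8
    have hl := h.le_logCardY_tail
    have hpred : 2 ^ (l - 1) ≤ 2 ^ l := Nat.pow_le_pow_right two_pos (Nat.sub_le l 1)
    simp only [logCardY]
    refine ⟨m + (2 ^ l - 2 ^ (l - 1)), ?_, ?_⟩
    · exact dvd_add ((pow_dvd_pow 2 (by omega)).trans hdvd)
        (Nat.dvd_sub (pow_dvd_pow 2 (Nat.sub_le l 1)) dvd_rfl)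
    · rw [Y_cons_eq_Ico_s8 hY (Nat.pow_le_pow_right two_pos hl)]
      congr 1
      omega

lemma exists_mem_Y_mod_eq {k : ℕ} {α : List ℕ} (h : ValidSeq k α) :
    ∃ y ∈ Y k α, y % 2 ^ α.headD k = 2 ^ α.headD k - 1 := by
  cases α with
  | nil =>
    refine ⟨2 ^ k - 1, ?_, Nat.mod_eq_of_lt (Nat.sub_lt (Nat.two_pow_pos k) one_pos)⟩
    simp [Y]
  | cons l β =>
    obtain ⟨m, hdvd, hY⟩ := Y_eq_aligned_Ico h.tail_s8
    have hl := h.le_logCardY_tail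
    obtain ⟨c, rfl⟩ := (pow_dvd_pow 2 hl).trans hdvd
    have hpred : 2 ^ (l - 1) ≤ 2 ^ l := Nat.pow_le_pow_right two_pos (Nat.sub_le l 1)
    have hpos : 0 < 2 ^ (l - 1) := Nat.two_pow_pos _
    refine ⟨2 ^ l * c + (2 ^ l - 1), ?_, ?_⟩
    · rw [Y_cons_eq_Ico_s8 hY (Nat.pow_le_pow_right two_pos hl), Finset.mem_Ico]
      omega
    · rw [List.headD_cons, Nat.mul_add_mod]
      exact Nat.mod_eq_of_lt (by omega)

lemma two_pow_sub_headD_le_stepA (k : ℕ) (α : List ℕ) : 2 ^ (k - α.headD k) ≤ stepA k α := by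
  cases α with
  | nil => simp [stepA]
  | cons l β => exact Nat.pow_le_pow_right two_pos (Nat.le_succ _)

/-- `max X^k_α + step^k_α ≥ 2^k`. -/
theorem max_add_step_ge (k : ℕ) (α : List ℕ) (h : ValidSeq k α) :
    2 ^ k ≤ sSup {z : ℕ | z ∈ X k α} + stepA k α := by
  obtain ⟨y, hy, hmod⟩ := exists_mem_Y_mod_eq h
  have hrev : 2 ^ k - 2 ^ (k - α.headD k) ≤ revBits k y :=
    sub_two_pow_le_revBits h.headD_le hmod
  have hmax : revBits k y ≤ sSup {z : ℕ | z ∈ X k α} :=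
    le_csSup (X k α).finite_toSet.bddAbove (Finset.mem_image_of_mem _ hy)
  have hstep := two_pow_sub_headD_le_stepA k α
  have hle : 2 ^ (k - α.headD k) ≤ 2 ^ k :=
    Nat.pow_le_pow_right two_pos (Nat.sub_le _ _)
  omega
end

section
/- The algorithm computing minRevBits_k(r_1, r_2) = min revBits_k([r_1, r_2]) by descending the binary search tree is correct: starting from x = 0 (representing the implicit root 2^{k−1} after the first move), with step s halved each iteration, moving right (x ← x + s) when x < r_1 and left (x ← x − s) when x > r_2, terminates with some x ∈ [r_1, r_2] satisfying revBits_k(x) = min{revBits_k(y) : r_1 ≤ y ≤ r_2}. -/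
/-- The loop of the `minRevBits` algorithm: while `x ∉ [r₁, r₂]`, move right (`x ← x + s`)
if `x < r₁` and left (`x ← x − s`) if `x > r₂`, halving the step `s` each iteration. -/
def mrbLoop (r1 r2 : ℕ) (x s : ℕ) : ℕ :=
  if r1 ≤ x ∧ x ≤ r2 then x
  else if s = 0 then x
  else if x < r1 then mrbLoop r1 r2 (x + s) (s / 2)
  else mrbLoop r1 r2 (x - s) (s / 2)
termination_by s
decreasing_by all_goals omega

open Set

theorem revBits_succ (k x : ℕ) : revBits (k + 1) x = revBits k (x / 2) + 2 ^ k * (x % 2) := by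
  rw [revBits, Finset.sum_range_succ, Nat.add_sub_cancel, Nat.sub_self, pow_zero, Nat.div_one,
    revBits]
  congr 1
  refine Finset.sum_congr rfl fun i hi => ?_
  rw [Finset.mem_range] at hi
  rw [Nat.div_div_eq_div_mul, ← pow_succ', show k - 1 - i + 1 = k - i by omega]

theorem revBits_lt_two_pow (k x : ℕ) : revBits k x < 2 ^ k := by
  induction k generalizing x with
  | zero => exact Nat.one_pos
  | succ k ih =>
    have := ih (x / 2)
    rcases Nat.mod_two_eq_zero_or_one x with h | h <;> simp only [revBits_succ, h, pow_succ] <;>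
      omega

theorem revBits_lt_two_pow_sub_iff {j k : ℕ} (hj : j ≤ k) (x : ℕ) :
    revBits k x < 2 ^ (k - j) ↔ 2 ^ j ∣ x := by
  induction j generalizing k x with
  | zero => simp [revBits_lt_two_pow]
  | succ j ih =>
    obtain ⟨k, rfl⟩ : ∃ k', k = k' + 1 := ⟨k - 1, by omega⟩
    rw [revBits_succ, Nat.add_sub_add_right]
    obtain ⟨y, rfl | rfl⟩ := Nat.even_or_odd' x
    · simp [pow_succ', Nat.mul_dvd_mul_iff_left, ih (by omega : j ≤ k)]
    · have hle : 2 ^ (k - j) ≤ 2 ^ k := Nat.pow_le_pow_right two_pos (Nat.sub_le k j)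
      have hodd : ¬ 2 ^ (j + 1) ∣ 2 * y + 1 := fun h =>
        Nat.not_two_dvd_bit1 y ((dvd_pow_self 2 j.succ_ne_zero).trans h)
      have hbit : (2 * y + 1) % 2 = 1 := by omega
      simp only [hodd, iff_false, not_lt, hbit, mul_one]
      omega

structure IsCoveringNode (r1 r2 j x : ℕ) : Prop where
  dvd : 2 ^ j ∣ x
  r2_lt_add : r2 < x + 2 ^ j
  lt_r1_add : x < r1 + 2 ^ j

namespace IsCoveringNode

variable {r1 r2 j x : ℕ}

theorem mem_Icc_of_height_zero (h : r1 ≤ r2) (hx : IsCoveringNode r1 r2 0 x) : x ∈ Icc r1 r2 := by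
  have hlt := hx.r2_lt_add; have hlt' := hx.lt_r1_add
  rw [pow_zero] at hlt hlt'
  exact ⟨by omega, by omega⟩

theorem descend (hx : IsCoveringNode r1 r2 (j + 1) x) (hout : x ∉ Icc r1 r2) :
    IsCoveringNode r1 r2 j (if x < r1 then x + 2 ^ j else x - 2 ^ j) := by
  have hdvd : 2 ^ j ∣ x := (pow_dvd_pow 2 j.le_succ).trans hx.dvd
  have hlt := hx.r2_lt_add; have hlt' := hx.lt_r1_add
  rw [pow_succ] at hlt hlt'
  split_ifs with hleft
  · exact ⟨hdvd.add dvd_rfl, by omega, by omega⟩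
  · have hr2 : r2 < x := by simp only [mem_Icc, not_and_or, not_le] at hout; omega
    have hle : 2 ^ (j + 1) ≤ x := Nat.le_of_dvd (by omega) hx.dvd
    rw [pow_succ] at hle
    exact ⟨Nat.dvd_sub hdvd dvd_rfl, by omega, by omega⟩

theorem eq_of_dvd (hx : IsCoveringNode r1 r2 j x) {y : ℕ}
    (hyI : y ∈ Icc r1 r2) (hy : 2 ^ j ∣ y) : y = x := by
  obtain ⟨hdvd, hlt, hlt'⟩ := hx
  refine ((Nat.modEq_zero_iff_dvd.2 hy).trans (Nat.modEq_zero_iff_dvd.2 hdvd).symm).eq_of_abs_lt ?_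
  rw [mem_Icc] at hyI
  rw [abs_sub_lt_iff]
  generalize 2 ^ j = w at *
  omega

theorem isLeast_revBits {k : ℕ} (hr2 : r2 < 2 ^ k) (hx : IsCoveringNode r1 r2 j x)
    (hxI : x ∈ Icc r1 r2) : IsLeast (revBits k '' Icc r1 r2) (revBits k x) := by
  wlog hjk : j ≤ k generalizing j
  · have hxr2 := hxI.2
    exact this ⟨(pow_dvd_pow 2 (by omega)).trans hx.dvd, by omega, by omega⟩ le_rfl
  refine ⟨mem_image_of_mem _ hxI, ?_⟩
  rintro _ ⟨y, hyI, rfl⟩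
  rcases eq_or_ne y x with rfl | hne
  · rfl
  have hy : ¬ 2 ^ j ∣ y := fun hy => hne (hx.eq_of_dvd hyI hy)
  calc revBits k x ≤ 2 ^ (k - j) := ((revBits_lt_two_pow_sub_iff hjk x).2 hx.dvd).le
    _ ≤ revBits k y := not_lt.1 (mt (revBits_lt_two_pow_sub_iff hjk y).1 hy)

end IsCoveringNode

theorem mrbLoop_of_mem {r1 r2 x : ℕ} (s : ℕ) (hx : x ∈ Icc r1 r2) : mrbLoop r1 r2 x s = x := by
  rw [mrbLoop, if_pos (mem_Icc.1 hx)]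

theorem mrbLoop_zero (r1 r2 x : ℕ) : mrbLoop r1 r2 x 0 = x := by
  rw [mrbLoop, if_pos rfl, ite_self]

theorem mrbLoop_of_not_mem {r1 r2 x s : ℕ} (hx : x ∉ Icc r1 r2) (hs : s ≠ 0) :
    mrbLoop r1 r2 x s = mrbLoop r1 r2 (if x < r1 then x + s else x - s) (s / 2) := by
  rw [mrbLoop, if_neg (mt mem_Icc.2 hx), if_neg hs]
  split_ifs <;> rfl

theorem IsCoveringNode.mrbLoop {r1 r2 j x : ℕ} (h : r1 ≤ r2) (hx : IsCoveringNode r1 r2 j x) :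
    ∃ i, mrbLoop r1 r2 x (2 ^ j / 2) ∈ Icc r1 r2 ∧
      IsCoveringNode r1 r2 i (mrbLoop r1 r2 x (2 ^ j / 2)) := by
  induction j generalizing x with
  | zero =>
    simp only [pow_zero, Nat.reduceDiv, mrbLoop_zero]
    exact ⟨0, hx.mem_Icc_of_height_zero h, hx⟩
  | succ j ih =>
    by_cases hxI : x ∈ Icc r1 r2
    · rw [mrbLoop_of_mem _ hxI]
      exact ⟨j + 1, hxI, hx⟩
    · rw [pow_succ, Nat.mul_div_cancel _ two_pos, mrbLoop_of_not_mem hxI (by positivity)]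
      exact ih (hx.descend hxI)

/-- Correctness of the tree-descent algorithm computing `minRevBits_k(r₁, r₂)`:
starting from `x = 0` with step `s = 2^{k−1}`, it terminates at some `x ∈ [r₁, r₂]` with
`revBits_k(x) = min revBits_k([r₁, r₂])`. -/
theorem minRevBits_correct (k r1 r2 : ℕ) (h1 : r1 ≤ r2) (h2 : r2 < 2 ^ k) :
    r1 ≤ mrbLoop r1 r2 0 (2 ^ (k - 1)) ∧ mrbLoop r1 r2 0 (2 ^ (k - 1)) ≤ r2 ∧
    revBits k (mrbLoop r1 r2 0 (2 ^ (k - 1))) = sInf (revBits k '' Set.Icc r1 r2) := by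
  -- the root `0` is taken at height `k - 1 + 1` rather than `k`, so that `k = 0` is no exception
  have hroot : IsCoveringNode r1 r2 (k - 1 + 1) 0 := by
    have : 2 ^ k ≤ 2 ^ (k - 1 + 1) := Nat.pow_le_pow_right two_pos (by omega)
    exact ⟨dvd_zero _, by omega, by positivity⟩
  obtain ⟨j, hI, hnode⟩ := hroot.mrbLoop h1
  rw [pow_succ, Nat.mul_div_cancel _ two_pos] at hI hnode
  exact ⟨hI.1, hI.2, (hnode.isLeast_revBits h2 hI).csInf_eq.symm⟩
end
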